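/- Let n ≥ 2 and let F : (ℳⁿ)ⁿ → ℝ be a nonnegative function which is additive in each variable and which satisfies F(A₁,…,Aₙ) = 0 whenever two of its arguments are proportional matrices of rank one. Let s, t₁, t₂ ∈ ℝⁿ be nonzero vectors such that t₂ = ε·t₁ + λ·s for some ε ∈ {1,−1} and some λ ∈ ℝ. Then for all A₃,…,Aₙ ∈ ℳⁿ, F(t₁t₁ᵀ, s sᵀ, A₃,…,Aₙ) = F(t₂t₂ᵀ, s sᵀ, A₃,…,Aₙ). -/

import Mathlib

/-!
Freeze every argument but the first, put `ssᵀ` in the second slot, and let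
`g x = F((εt₁ + xs)(εt₁ + xs)ᵀ, ssᵀ, …)`. The parallelogram identity
`(a + ys)(a + ys)ᵀ + (a - ys)(a - ys)ᵀ = 2aaᵀ + 2(ys)(ys)ᵀ`, additivity, and the vanishing of `F`
on the proportional pair `((ys)(ys)ᵀ, ssᵀ)` give `g(x + y) + g(x - y) = 2g(x)`. Hence `k ↦ g(ky)`
is an arithmetic progression with `g(-ky) = 2g(0) - g(ky)`; as `g ≥ 0` it must be constant, so
`g(λ) = g(0)`.
-/

open Matrix

theorem Matrix.rank_vecMulVec_of_ne_zero {m K : Type*} [Fintype m] [DecidableEq m] [Field K]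
    {w v : m → K} (hw : w ≠ 0) (hv : v ≠ 0) : (vecMulVec w v).rank = 1 := by
  refine le_antisymm (rank_vecMulVec_le w v) <|
    Nat.one_le_iff_ne_zero.mpr fun h => vecMulVec_ne_zero hw hv ?_
  rw [Matrix.rank, Submodule.finrank_eq_zero, LinearMap.range_eq_bot, ← Matrix.toLin'_apply'] at h
  exact Matrix.toLin'.injective (h.trans (map_zero _).symm)

theorem Matrix.vecMulVec_add_add_vecMulVec_sub_sub {m R : Type*} [CommRing R] (a b : m → R) :
    vecMulVec (a + b) (a + b) + vecMulVec (a - b) (a - b) =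
      (vecMulVec a a + vecMulVec b b) + (vecMulVec a a + vecMulVec b b) := by
  ext i j
  simp only [add_apply, vecMulVec_apply, Pi.add_apply, Pi.sub_apply]
  ring

section JensenEquation

variable {g : ℝ → ℝ} (hg : ∀ x y, g (x + y) + g (x - y) = 2 * g x)
include hg

theorem apply_natCast_mul_of_jensen (y : ℝ) (k : ℕ) : g (k * y) = g 0 + k * (g y - g 0) := by
  induction k using Nat.twoStepInduction with
  | zero => simp
  | one => simp
  | more k hk hk1 =>
    have h := hg ((k + 1 : ℕ) * y) y
    rw [show ((k + 1 : ℕ) : ℝ) * y + y = (k + 2 : ℕ) * y by push_cast; ring,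
      show ((k + 1 : ℕ) : ℝ) * y - y = k * y by push_cast; ring] at h
    push_cast at h hk1 ⊢
    linarith

theorem apply_eq_apply_zero_of_jensen_of_bddBelow (hbdd : BddBelow (Set.range g)) (y : ℝ) :
    g y = g 0 := by
  obtain ⟨c, hc⟩ := hbdd
  have hbound : ∀ k : ℕ, k * |g y - g 0| ≤ g 0 - c := by
    intro k
    have hpos := hc ⟨k * y, rfl⟩
    have hneg := hc ⟨-(k * y), rfl⟩
    have hodd := hg 0 (k * y)
    rw [zero_add, zero_sub, apply_natCast_mul_of_jensen hg] at hodd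
    rw [apply_natCast_mul_of_jensen hg] at hpos
    rcases abs_cases (g y - g 0) with ⟨habs, -⟩ | ⟨habs, -⟩ <;> rw [habs] <;> linarith
  by_contra hne
  have hd : 0 < |g y - g 0| := abs_pos.mpr (sub_ne_zero.mpr hne)
  obtain ⟨k, hk⟩ := exists_nat_gt ((g 0 - c) / |g y - g 0|)
  linarith [hbound k, (div_lt_iff₀ hd).mp hk]

end JensenEquation

theorem Matrix.posSemidef_vecMulVec_self {m : Type*} [Finite m] (v : m → ℝ) :
    (vecMulVec v v).PosSemidef := by
  simpa using posSemidef_vecMulVec_self_star v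

section AdditiveOnPosSemidef

variable {m : Type*} [Finite m] {G : Matrix m m ℝ → ℝ}
  (hadd : ∀ T B, T.PosSemidef → B.PosSemidef → G (T + B) = G T + G B)
include hadd

theorem apply_vecMulVec_add_sub_of_additive_on_posSemidef {s : m → ℝ}
    (hs : ∀ y : ℝ, y ≠ 0 → G (vecMulVec (y • s) (y • s)) = 0) (a : m → ℝ) (y : ℝ) :
    G (vecMulVec (a + y • s) (a + y • s)) + G (vecMulVec (a - y • s) (a - y • s)) =
      2 * G (vecMulVec a a) := by
  have hs₀ : G (vecMulVec (y • s) (y • s)) = 0 := by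
    rcases eq_or_ne y 0 with rfl | hy
    · have h := hadd 0 0 .zero .zero
      rw [add_zero] at h
      simpa using h
    · exact hs y hy
  have ha := posSemidef_vecMulVec_self a
  have hy := posSemidef_vecMulVec_self (y • s)
  rw [← hadd _ _ (posSemidef_vecMulVec_self _) (posSemidef_vecMulVec_self _),
    vecMulVec_add_add_vecMulVec_sub_sub, hadd _ _ (ha.add hy) (ha.add hy), hadd _ _ ha hy, hs₀]
  ring

theorem apply_vecMulVec_add_smul_of_additive_on_posSemidef
    (hnonneg : ∀ T, T.PosSemidef → 0 ≤ G T) {s : m → ℝ}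
    (hs : ∀ y : ℝ, y ≠ 0 → G (vecMulVec (y • s) (y • s)) = 0) (a : m → ℝ) (lam : ℝ) :
    G (vecMulVec (a + lam • s) (a + lam • s)) = G (vecMulVec a a) := by
  set g : ℝ → ℝ := fun x => G (vecMulVec (a + x • s) (a + x • s))
  have hjensen : ∀ x y, g (x + y) + g (x - y) = 2 * g x := by
    intro x y
    simpa only [g, add_smul, sub_smul, ← add_assoc, ← add_sub_assoc] using
      apply_vecMulVec_add_sub_of_additive_on_posSemidef hadd hs (a + x • s) y
  have hbdd : BddBelow (Set.range g) :=
    ⟨0, by rintro _ ⟨x, rfl⟩; exact hnonneg _ (posSemidef_vecMulVec_self _)⟩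
  simpa [g] using apply_eq_apply_zero_of_jensen_of_bddBelow hjensen hbdd lam

end AdditiveOnPosSemidef

section Multiadditive

variable {ι M : Type*} [DecidableEq ι] {P : M → Prop} {F : (ι → M) → ℝ}
  {A : ι → M} (hA : ∀ j, P (A j))
include hA

theorem forall_update_of_forall {i : ι} {T : M} (hT : P T) : ∀ j, P (Function.update A i T j) :=
  (Function.forall_update_iff A fun _ X => P X).mpr ⟨hT, fun j _ => hA j⟩

theorem apply_update_add_of_additive [Add M]
    (hadd : ∀ (A : ι → M) (i : ι) (B : M), (∀ j, P (A j)) → P B →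
      F (Function.update A i (A i + B)) = F A + F (Function.update A i B))
    (i : ι) {T B : M} (hT : P T) (hB : P B) :
    F (Function.update A i (T + B)) = F (Function.update A i T) + F (Function.update A i B) := by
  simpa using hadd (Function.update A i T) i B (forall_update_of_forall hA hT) hB

end Multiadditive

/-- Lemma 4 of Florentin–Milman–Schneider: if `F` is nonnegative, additive in each
variable and vanishes when two arguments are proportional rank-one matrices, and if
the centered segments `[-t₁,t₁]`, `[-t₂,t₂]`, `[-s,s]` satisfy
`T₁ + ℝS = T₂ + ℝS` (i.e. `t₂ = ±t₁ + λs`), then `F` takes the same value on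
`(t₁t₁ᵀ, ssᵀ, A₃, …, Aₙ)` and `(t₂t₂ᵀ, ssᵀ, A₃, …, Aₙ)`. -/
theorem F_eq_of_segments_span {n : ℕ} (hn : 2 ≤ n)
    (F : (Fin n → Matrix (Fin n) (Fin n) ℝ) → ℝ)
    (hnonneg : ∀ A : Fin n → Matrix (Fin n) (Fin n) ℝ,
      (∀ j, (A j).PosSemidef) → 0 ≤ F A)
    (hadd : ∀ (A : Fin n → Matrix (Fin n) (Fin n) ℝ) (i : Fin n)
      (B : Matrix (Fin n) (Fin n) ℝ), (∀ j, (A j).PosSemidef) → B.PosSemidef →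
      F (Function.update A i (A i + B)) = F A + F (Function.update A i B))
    (hvanish : ∀ A : Fin n → Matrix (Fin n) (Fin n) ℝ,
      (∀ j, (A j).PosSemidef) →
      (∃ i j, i ≠ j ∧ (A i).rank = 1 ∧ (A j).rank = 1 ∧
        ∃ c : ℝ, 0 < c ∧ A i = c • A j) →
      F A = 0)
    (s t₁ t₂ : Fin n → ℝ) (hs : s ≠ 0)
    (ε lam : ℝ) (hε : ε = 1 ∨ ε = -1) (ht : t₂ = ε • t₁ + lam • s) :
    ∀ A : Fin n → Matrix (Fin n) (Fin n) ℝ, (∀ j, (A j).PosSemidef) →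
      F (Function.update (Function.update A ⟨0, by omega⟩
            (Matrix.vecMulVec t₁ t₁)) ⟨1, by omega⟩ (Matrix.vecMulVec s s)) =
      F (Function.update (Function.update A ⟨0, by omega⟩
            (Matrix.vecMulVec t₂ t₂)) ⟨1, by omega⟩ (Matrix.vecMulVec s s)) := by
  intro A hA
  set i₀ : Fin n := ⟨0, by omega⟩
  set i₁ : Fin n := ⟨1, by omega⟩
  have hne : i₀ ≠ i₁ := by simp [i₀, i₁, Fin.ext_iff]
  set A' := Function.update A i₁ (vecMulVec s s)
  have hA' : ∀ j, (A' j).PosSemidef := forall_update_of_forall hA (posSemidef_vecMulVec_self s)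
  rw [Function.update_comm hne, Function.update_comm hne]
  have hproportional :
      ∀ y : ℝ, y ≠ 0 → F (Function.update A' i₀ (vecMulVec (y • s) (y • s))) = 0 := by
    intro y hy
    refine hvanish _ (forall_update_of_forall hA' (posSemidef_vecMulVec_self _))
      ⟨i₀, i₁, hne, ?_, ?_, y * y, mul_self_pos.mpr hy, ?_⟩ <;>
      simp only [Function.update_self, Function.update_of_ne hne.symm, A']
    · exact rank_vecMulVec_of_ne_zero (smul_ne_zero hy hs) (smul_ne_zero hy hs)
    · exact rank_vecMulVec_of_ne_zero hs hs
    · rw [smul_vecMulVec, vecMulVec_smul, smul_smul]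
  have hεt₁ : vecMulVec (ε • t₁) (ε • t₁) = vecMulVec t₁ t₁ := by
    rw [smul_vecMulVec, vecMulVec_smul, smul_smul]
    rcases hε with rfl | rfl <;> norm_num
  rw [ht, apply_vecMulVec_add_smul_of_additive_on_posSemidef
    (fun T B hT hB => apply_update_add_of_additive hA' hadd i₀ hT hB)
    (fun T hT => hnonneg _ (forall_update_of_forall hA' hT)) hproportional, hεt₁]
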